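/- For a finite graph, the block structure (obtained by contracting each block to a fat vertex attached at its cut vertices) contains no cycle: the incidence structure of blocks and cut vertices forms a forest (the block-cut tree is acyclic). -/

import Mathlib

/-!
Every edge of the block-cut graph is a bridge. If a block `B` and a vertex `v` on it were joined
in the block-cut graph by a path avoiding the edge between them, that path would leave `B` at
another vertex `v'` of `B` and afterwards meet only blocks other than `B`, whose edge sets are
disjoint from that of `B`. So `G` would have a closed walk made of a walk `v → v'` inside `B`
and a walk `v' → v` avoiding `B`.

The edge set of a block contains every cycle it meets. Splitting a closed walk at repeated
vertices and at edges traversed back and forth decomposes it into cycles, so the part of its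
1-chain carried by a block is a cycle: its boundary vanishes. For the closed walk above that part
is the chain of the walk `v → v'`, with boundary `v' - v ≠ 0`.
-/

open scoped Classical

/-- A finite multigraph: edges with a source and target vertex. -/
structure Multigraph (V E : Type) where
  src : E → V
  tgt : E → V

/-- A dart is an oriented edge: an edge together with a direction. -/
abbrev Dart (E : Type) := E × Bool

namespace Multigraph

variable {V E : Type}

/-- Source of a dart. -/
def dsrc (G : Multigraph V E) (d : Dart E) : V := if d.2 then G.src d.1 else G.tgt d.1

/-- Target of a dart. -/
def dtgt (G : Multigraph V E) (d : Dart E) : V := if d.2 then G.tgt d.1 else G.src d.1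

/-- A closed walk: a nonempty cyclically consistent list of darts. -/
def IsClosedWalk (G : Multigraph V E) (w : List (Dart E)) : Prop :=
  w ≠ [] ∧ List.Chain' (fun d d' => G.dtgt d = G.dsrc d') w ∧
    ∀ dl ∈ w.getLast?, ∀ dh ∈ w.head?, G.dtgt dl = G.dsrc dh

/-- A cycle: a closed walk repeating no edges and no vertices. -/
def IsCycle (G : Multigraph V E) (w : List (Dart E)) : Prop :=
  G.IsClosedWalk w ∧ (w.map Prod.fst).Nodup ∧ (w.map G.dsrc).Nodup

/-- A walk from `u` to `v`. -/
def IsWalkFrom (G : Multigraph V E) (w : List (Dart E)) (u v : V) : Prop :=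
  List.Chain' (fun d d' => G.dtgt d = G.dsrc d') w ∧
    (w = [] → u = v) ∧ (∀ d ∈ w.head?, G.dsrc d = u) ∧ (∀ d ∈ w.getLast?, G.dtgt d = v)

/-- Connectivity: any two vertices are joined by a walk. -/
def Conn (G : Multigraph V E) : Prop := ∀ u v : V, ∃ w, G.IsWalkFrom w u v

/-- The 1-chain (with `ℤ` coefficients) of a single dart. -/
noncomputable def dartChain (d : Dart E) : E → ℤ :=
  fun e => if d.1 = e then (if d.2 then 1 else -1) else 0

/-- The 1-chain of a walk. -/
noncomputable def chain (w : List (Dart E)) : E → ℤ := (w.map dartChain).sum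

/-- The length of a walk given edge lengths `l`. -/
def walkLength (l : E → ℝ) (w : List (Dart E)) : ℝ := (w.map fun d => l d.1).sum

/-- The set of (unoriented) edges used by a walk. -/
def edges (w : List (Dart E)) : Set E := {e | ∃ b, (e, b) ∈ w}

/-- The set of vertices visited by a closed walk. -/
def vertsOf (G : Multigraph V E) (w : List (Dart E)) : Set V := {v | ∃ d ∈ w, G.dsrc d = v}

/-- Restriction of a graph to a set of edges. -/
def restrict (G : Multigraph V E) (S : Set E) : Multigraph V S where
  src e := G.src e.1
  tgt e := G.tgt e.1

/-- Deletion of a set of vertices (and all incident edges). -/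
def deleteVerts (G : Multigraph V E) (X : Set V) :
    Multigraph {v // v ∉ X} {e // G.src e ∉ X ∧ G.tgt e ∉ X} where
  src e := ⟨G.src e.1, e.2.1⟩
  tgt e := ⟨G.tgt e.1, e.2.2⟩

/-- Degree of a vertex (loops count twice). -/
noncomputable def degree (G : Multigraph V E) [Fintype E] (v : V) : ℕ :=
  (Finset.univ.filter fun e => G.src e = v).card +
  (Finset.univ.filter fun e => G.tgt e = v).card

/-- The boundary of a 1-chain. -/
noncomputable def boundary (G : Multigraph V E) [Fintype E] (x : E → ℤ) : V → ℤ :=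
  fun v => ∑ e, x e * ((if G.tgt e = v then 1 else 0) - (if G.src e = v then 1 else 0))

/-- The first homology `H₁(G,ℤ)`, as the kernel of the boundary map. -/
def H1 (G : Multigraph V E) [Fintype E] : Submodule ℤ (E → ℤ) where
  carrier := {x | G.boundary x = 0}
  add_mem' := by
    intro a b ha hb
    have h : G.boundary (a + b) = G.boundary a + G.boundary b := by
      funext v
      simp [boundary, add_mul, Finset.sum_add_distrib]
    simp only [Set.mem_setOf_eq] at *
    rw [h, ha, hb, add_zero]
  zero_mem' := by
    simp only [Set.mem_setOf_eq]
    funext v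
    simp [boundary]
  smul_mem' := by
    intro c x hx
    have h : G.boundary (c • x) = c • G.boundary x := by
      funext v
      simp [boundary, Finset.mul_sum, mul_assoc]
    simp only [Set.mem_setOf_eq] at *
    rw [h, hx, smul_zero]

/-- The path metric induced by edge lengths. -/
noncomputable def gdist (G : Multigraph V E) (l : E → ℝ) (u v : V) : ℝ :=
  sInf {x | ∃ w, G.IsWalkFrom w u v ∧ walkLength l w = x}

/-- Minimal length of a closed walk in a given homology class. -/
noncomputable def minLen (G : Multigraph V E) (l : E → ℝ) (h : E → ℤ) : ℝ :=
  sInf {x | ∃ w, G.IsClosedWalk w ∧ chain w = h ∧ walkLength l w = x}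

end Multigraph

open Multigraph

/-- The relation generating block equivalence: two cycles are related if they share an edge. -/
def CycleRel {V E : Type} (G : Multigraph V E) :
    {w : List (Dart E) // G.IsCycle w} → {w : List (Dart E) // G.IsCycle w} → Prop :=
  fun a b => ∃ e, e ∈ Multigraph.edges a.1 ∧ e ∈ Multigraph.edges b.1

/-- Blocks: equivalence classes of cycles under the relation generated by edge-sharing. -/
def Block {V E : Type} (G : Multigraph V E) := Quot (CycleRel G)

/-- The set of vertices lying on a block. -/
def vertsOfBlock {V E : Type} (G : Multigraph V E) (B : Block G) : Set V :=
  {v | ∃ c : {w : List (Dart E) // G.IsCycle w},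
    Quot.mk (CycleRel G) c = B ∧ v ∈ G.vertsOf c.1}

/-- A cut vertex: a vertex whose deletion disconnects the graph. -/
def IsCutVertex {V E : Type} (G : Multigraph V E) (v : V) : Prop :=
  ¬ (G.deleteVerts {v}).Conn

/-- The block-cut tree: the bipartite incidence graph of blocks and cut vertices, with a
block adjacent to a cut vertex iff the cut vertex lies on the block. -/
def blockCutGraph {V E : Type} (G : Multigraph V E) :
    SimpleGraph (Block G ⊕ {v : V // IsCutVertex G v}) :=
  SimpleGraph.fromRel (fun x y =>
    ∃ (B : Block G) (v : {v : V // IsCutVertex G v}),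
      x = Sum.inl B ∧ y = Sum.inr v ∧ v.1 ∈ vertsOfBlock G B)

theorem List.exists_split_of_not_nodup_map {α β : Type*} {f : α → β} {l : List α}
    (h : ¬ (l.map f).Nodup) : ∃ s m t a b, l = s ++ a :: (m ++ b :: t) ∧ f a = f b := by
  induction l with
  | nil => simp at h
  | cons x xs ih =>
    rw [List.map_cons, List.nodup_cons, not_and_or, not_not] at h
    rcases h with hx | hxs
    · obtain ⟨b, hb, hfb⟩ := List.mem_map.mp hx
      obtain ⟨m, t, rfl⟩ := List.append_of_mem hb
      exact ⟨[], m, t, x, b, rfl, hfb.symm⟩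
    · obtain ⟨s, m, t, a, b, rfl, hab⟩ := ih hxs
      exact ⟨x :: s, m, t, a, b, rfl, hab⟩

namespace Multigraph

variable {V E : Type} {G : Multigraph V E}

theorem dtgt_eq_dsrc_not (e : E) (b : Bool) : G.dtgt (e, b) = G.dsrc (e, !b) := by
  cases b <;> rfl

theorem isWalkFrom_nil (u : V) : G.IsWalkFrom [] u u :=
  ⟨List.isChain_nil, fun _ => rfl, by simp, by simp⟩

theorem isWalkFrom_cons {d : Dart E} {t : List (Dart E)} {u v : V} :
    G.IsWalkFrom (d :: t) u v ↔ G.dsrc d = u ∧ G.IsWalkFrom t (G.dtgt d) v := by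
  rcases t with _ | ⟨d', t⟩
  · simp [IsWalkFrom, List.Chain', eq_comm]
  · simp only [IsWalkFrom, List.Chain', List.isChain_cons_cons, List.getLast?_cons_cons,
      List.head?_cons, Option.mem_def, Option.some.injEq, forall_eq', reduceCtorEq,
      eq_comm (a := G.dtgt d)]
    tauto

theorem isWalkFrom_append {w₁ w₂ : List (Dart E)} {u v : V} :
    G.IsWalkFrom (w₁ ++ w₂) u v ↔ ∃ m, G.IsWalkFrom w₁ u m ∧ G.IsWalkFrom w₂ m v := by
  induction w₁ generalizing u with
  | nil =>
    refine ⟨fun h => ⟨u, isWalkFrom_nil u, h⟩, ?_⟩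
    rintro ⟨m, ⟨-, hum, -⟩, h⟩
    rwa [hum rfl]
  | cons d t ih => simp only [List.cons_append, isWalkFrom_cons, ih, exists_and_left, and_assoc]

theorem IsWalkFrom.append {w₁ w₂ : List (Dart E)} {u m v : V} (h₁ : G.IsWalkFrom w₁ u m)
    (h₂ : G.IsWalkFrom w₂ m v) : G.IsWalkFrom (w₁ ++ w₂) u v :=
  isWalkFrom_append.mpr ⟨m, h₁, h₂⟩

theorem IsWalkFrom.isClosedWalk {w : List (Dart E)} {u : V} (h : G.IsWalkFrom w u u)
    (hne : w ≠ []) : G.IsClosedWalk w := by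
  obtain ⟨hc, -, hh, hl⟩ := h
  exact ⟨hne, hc, fun dl hdl dh hdh => (hl dl hdl).trans (hh dh hdh).symm⟩

theorem IsClosedWalk.exists_isWalkFrom {w : List (Dart E)} (h : G.IsClosedWalk w) :
    ∃ u, G.IsWalkFrom w u u := by
  obtain ⟨hne, hc, hwrap⟩ := h
  obtain ⟨d, t, rfl⟩ := List.exists_cons_of_ne_nil hne
  refine ⟨G.dsrc d, hc, by simp, by simp, fun dl hdl => hwrap dl hdl d rfl⟩

theorem IsWalkFrom.split_of_dsrc_eq {s m t : List (Dart E)} {a b : Dart E} {u : V}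
    (h : G.IsWalkFrom (s ++ a :: (m ++ b :: t)) u u) (hab : G.dsrc a = G.dsrc b) :
    G.IsWalkFrom (a :: m) (G.dsrc a) (G.dsrc a) ∧ G.IsWalkFrom (s ++ b :: t) u u := by
  obtain ⟨x, hs, hrest⟩ := isWalkFrom_append.mp h
  obtain ⟨hx, hrest⟩ := isWalkFrom_cons.mp hrest
  obtain ⟨y, hm, hbt⟩ := isWalkFrom_append.mp hrest
  have hy : y = G.dsrc a := (isWalkFrom_cons.mp hbt).1.symm.trans hab.symm
  subst hx hy
  exact ⟨isWalkFrom_cons.mpr ⟨rfl, hm⟩, hs.append hbt⟩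

theorem IsWalkFrom.split_of_flip {s m t : List (Dart E)} {e : E} {b : Bool} {u : V}
    (h : G.IsWalkFrom (s ++ (e, b) :: (m ++ (e, !b) :: t)) u u) :
    G.IsWalkFrom m (G.dtgt (e, b)) (G.dtgt (e, b)) ∧ G.IsWalkFrom (s ++ t) u u := by
  obtain ⟨x, hs, hrest⟩ := isWalkFrom_append.mp h
  obtain ⟨hx, hrest⟩ := isWalkFrom_cons.mp hrest
  obtain ⟨y, hm, hbt⟩ := isWalkFrom_append.mp hrest
  obtain ⟨hy, ht⟩ := isWalkFrom_cons.mp hbt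
  have hback : G.dtgt (e, !b) = x := by simpa [hx] using dtgt_eq_dsrc_not (G := G) e (!b)
  rw [← hy, ← dtgt_eq_dsrc_not] at hm
  exact ⟨hm, hs.append (hback ▸ ht)⟩

theorem IsWalkFrom.mem_vertsOf_of_ne_nil {w : List (Dart E)} {u v : V}
    (hw : G.IsWalkFrom w u v) (hne : w ≠ []) : u ∈ G.vertsOf w := by
  obtain ⟨d, t, rfl⟩ := List.exists_cons_of_ne_nil hne
  exact ⟨d, List.mem_cons_self, (isWalkFrom_cons.mp hw).1⟩

theorem IsWalkFrom.exists_split_of_mem_vertsOf {w : List (Dart E)} {u a : V}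
    (hw : G.IsWalkFrom w u u) (ha : a ∈ G.vertsOf w) :
    ∃ s t, w = s ++ t ∧ G.IsWalkFrom s u a ∧ G.IsWalkFrom t a u := by
  obtain ⟨d, hd, rfl⟩ := ha
  obtain ⟨s, t, rfl⟩ := List.append_of_mem hd
  obtain ⟨x, hs, hdt⟩ := isWalkFrom_append.mp hw
  obtain ⟨rfl, -⟩ := isWalkFrom_cons.mp hdt
  exact ⟨s, d :: t, rfl, hs, hdt⟩

theorem IsWalkFrom.exists_walk_of_mem_vertsOf {w : List (Dart E)} {u a b : V}
    (hw : G.IsWalkFrom w u u) (ha : a ∈ G.vertsOf w) (hb : b ∈ G.vertsOf w) :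
    ∃ p, G.IsWalkFrom p a b ∧ ∀ d ∈ p, d ∈ w := by
  obtain ⟨s, t, rfl, -, ht⟩ := hw.exists_split_of_mem_vertsOf ha
  obtain ⟨s', t', hst, hs', -⟩ := hw.exists_split_of_mem_vertsOf hb
  refine ⟨t ++ s', ht.append hs', fun d hd => ?_⟩
  rw [hst]
  grind

theorem IsWalkFrom.dtgt_mem_vertsOf {w : List (Dart E)} {u : V} {d : Dart E}
    (hw : G.IsWalkFrom w u u) (hd : d ∈ w) : G.dtgt d ∈ G.vertsOf w := by
  obtain ⟨s, t, rfl⟩ := List.append_of_mem hd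
  obtain ⟨x, -, hdt⟩ := isWalkFrom_append.mp hw
  obtain ⟨-, ht⟩ := isWalkFrom_cons.mp hdt
  rcases t with _ | ⟨d', t⟩
  · rw [ht.2.1 rfl]
    exact hw.mem_vertsOf_of_ne_nil (by simp)
  · exact ⟨d', by simp, (isWalkFrom_cons.mp ht).1⟩

theorem IsWalkFrom.src_mem_vertsOf {w : List (Dart E)} {u : V} {e : E} {b : Bool}
    (hw : G.IsWalkFrom w u u) (hd : (e, b) ∈ w) : G.src e ∈ G.vertsOf w := by
  cases b
  · exact hw.dtgt_mem_vertsOf hd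
  · exact ⟨_, hd, rfl⟩

theorem boundary_zero [Fintype E] : G.boundary 0 = 0 := by
  funext v
  simp [boundary]

theorem boundary_add [Fintype E] (x y : E → ℤ) :
    G.boundary (x + y) = G.boundary x + G.boundary y := by
  funext v
  simp [boundary, add_mul, Finset.sum_add_distrib]

theorem boundary_dartChain [Fintype E] (d : Dart E) :
    G.boundary (dartChain d) = Pi.single (G.dtgt d) 1 - Pi.single (G.dsrc d) 1 := by
  funext v
  rcases d with ⟨e, b⟩
  simp only [boundary, dartChain, ite_mul, zero_mul, Finset.sum_ite_eq, Finset.mem_univ, if_true]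
  cases b <;> simp [dsrc, dtgt, Pi.single_apply, eq_comm]

theorem chain_cons (d : Dart E) (w : List (Dart E)) :
    chain (d :: w) = dartChain d + chain w := by
  simp [chain]

theorem chain_append (w₁ w₂ : List (Dart E)) : chain (w₁ ++ w₂) = chain w₁ + chain w₂ := by
  simp [chain]

theorem dartChain_add_dartChain_not (e : E) (b : Bool) :
    dartChain (e, b) + dartChain (e, !b) = 0 := by
  funext e'
  cases b <;> by_cases h : e = e' <;> simp [dartChain, h]

theorem IsWalkFrom.boundary_chain [Fintype E] {w : List (Dart E)} {u v : V}
    (h : G.IsWalkFrom w u v) : G.boundary (chain w) = Pi.single v 1 - Pi.single u 1 := by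
  induction w generalizing u with
  | nil => simp [h.2.1 rfl, chain, boundary_zero]
  | cons d t ih =>
    obtain ⟨rfl, ht⟩ := isWalkFrom_cons.mp h
    rw [chain_cons, boundary_add, boundary_dartChain, ih ht]
    abel

def IsCycleSaturated (G : Multigraph V E) (S : Set E) : Prop :=
  ∀ w, G.IsCycle w → ∀ e ∈ edges w, e ∈ S → edges w ⊆ S

noncomputable def chainOn (S : Set E) (w : List (Dart E)) : E → ℤ :=
  chain (w.filter fun d => d.1 ∈ S)

theorem chainOn_append (S : Set E) (w₁ w₂ : List (Dart E)) :
    chainOn S (w₁ ++ w₂) = chainOn S w₁ + chainOn S w₂ := by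
  simp [chainOn, chain_append]

theorem chainOn_eq_chain {S : Set E} {w : List (Dart E)} (h : ∀ d ∈ w, d.1 ∈ S) :
    chainOn S w = chain w := by
  rw [chainOn, List.filter_eq_self.mpr (by simpa using h)]

theorem chainOn_eq_zero {S : Set E} {w : List (Dart E)} (h : ∀ d ∈ w, d.1 ∉ S) :
    chainOn S w = 0 := by
  rw [chainOn, List.filter_eq_nil_iff.mpr (by simpa using h)]
  simp [chain]

theorem chainOn_pair_not (S : Set E) (e : E) (b : Bool) : chainOn S [(e, b), (e, !b)] = 0 := by
  by_cases he : e ∈ S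
  · rw [chainOn_eq_chain (by simp [he])]
    simpa [chain] using dartChain_add_dartChain_not e b
  · exact chainOn_eq_zero (by simp [he])

theorem mem_edges_of_mem {w : List (Dart E)} {d : Dart E} (hd : d ∈ w) : d.1 ∈ edges w :=
  ⟨d.2, hd⟩

theorem chainOn_split (S : Set E) (s m t : List (Dart E)) (a b : Dart E) :
    chainOn S (s ++ a :: (m ++ b :: t)) = chainOn S (a :: m) + chainOn S (s ++ b :: t) := by
  rw [show s ++ a :: (m ++ b :: t) = s ++ [a] ++ m ++ [b] ++ t by simp,
    show a :: m = [a] ++ m from rfl, show s ++ b :: t = s ++ [b] ++ t by simp]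
  simp only [chainOn_append]
  abel

theorem chainOn_split_flip (S : Set E) (s m t : List (Dart E)) (e : E) (b : Bool) :
    chainOn S (s ++ (e, b) :: (m ++ (e, !b) :: t)) = chainOn S m + chainOn S (s ++ t) := by
  have h := chainOn_pair_not S e b
  rw [show [(e, b), (e, !b)] = [(e, b)] ++ [(e, !b)] from rfl] at h
  rw [show s ++ (e, b) :: (m ++ (e, !b) :: t) = s ++ [(e, b)] ++ m ++ [(e, !b)] ++ t by simp]
  simp only [chainOn_append] at h ⊢
  linear_combination h

theorem IsCycleSaturated.boundary_chainOn [Fintype E] {S : Set E} (hS : G.IsCycleSaturated S)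
    {w : List (Dart E)} {u : V} (hw : G.IsWalkFrom w u u) : G.boundary (chainOn S w) = 0 := by
  by_cases hV : (w.map G.dsrc).Nodup
  · by_cases hE : (w.map Prod.fst).Nodup
    · rcases eq_or_ne w [] with rfl | hne
      · simp [chainOn, chain, boundary_zero]
      have hcyc : G.IsCycle w := ⟨hw.isClosedWalk hne, hE, hV⟩
      by_cases hmeet : ∃ d ∈ w, d.1 ∈ S
      · obtain ⟨d, hd, hdS⟩ := hmeet
        rw [chainOn_eq_chain fun d' hd' =>
          hS w hcyc d.1 (mem_edges_of_mem hd) hdS (mem_edges_of_mem hd'), hw.boundary_chain,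
          sub_self]
      · rw [chainOn_eq_zero fun d hd hdS => hmeet ⟨d, hd, hdS⟩, boundary_zero]
    · obtain ⟨s, m, t, ⟨e, x⟩, ⟨e', y⟩, hsplit, rfl : e = e'⟩ :=
        List.exists_split_of_not_nodup_map hE
      -- the same dart twice would repeat a source vertex
      obtain rfl : y = !x := by
        subst hsplit
        cases x <;> cases y <;> simp_all [List.nodup_append]
      obtain ⟨h₁, h₂⟩ := (hsplit ▸ hw).split_of_flip
      rw [hsplit, chainOn_split_flip, boundary_add, hS.boundary_chainOn h₁, hS.boundary_chainOn h₂,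
        add_zero]
  · obtain ⟨s, m, t, a, b, hsplit, hab⟩ := List.exists_split_of_not_nodup_map hV
    obtain ⟨h₁, h₂⟩ := (hsplit ▸ hw).split_of_dsrc_eq hab
    rw [hsplit, chainOn_split, boundary_add, hS.boundary_chainOn h₁, hS.boundary_chainOn h₂,
      add_zero]
termination_by w.length
decreasing_by all_goals simp only [hsplit, List.length_append, List.length_cons]; omega

theorem IsCycleSaturated.eq_of_isWalkFrom [Fintype E] {S : Set E} (hS : G.IsCycleSaturated S)
    {p q : List (Dart E)} {u v : V} (hp : G.IsWalkFrom p u v) (hpS : ∀ d ∈ p, d.1 ∈ S)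
    (hq : G.IsWalkFrom q v u) (hqS : ∀ d ∈ q, d.1 ∉ S) : u = v := by
  have h := hS.boundary_chainOn (hp.append hq)
  rw [chainOn_append, chainOn_eq_chain hpS, chainOn_eq_zero hqS, add_zero,
    hp.boundary_chain] at h
  by_contra huv
  simpa [huv] using congrFun h v

end Multigraph

section BlockCutGraph

variable {V E : Type} {G : Multigraph V E}

def blockEdges (G : Multigraph V E) (B : Block G) : Set E :=
  {e | ∃ c : {w : List (Dart E) // G.IsCycle w}, Quot.mk (CycleRel G) c = B ∧ e ∈ edges c.1}

instance : Std.Symm (CycleRel G) := ⟨fun _ _ ⟨e, h₁, h₂⟩ => ⟨e, h₂, h₁⟩⟩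

theorem mem_blockEdges_mk (c : {w : List (Dart E) // G.IsCycle w}) {d : Dart E} (hd : d ∈ c.1) :
    d.1 ∈ blockEdges G (Quot.mk _ c) :=
  ⟨c, rfl, mem_edges_of_mem hd⟩

theorem mk_eq_of_mem_blockEdges {c : {w : List (Dart E) // G.IsCycle w}} {B : Block G} {e : E}
    (he : e ∈ edges c.1) (heB : e ∈ blockEdges G B) : Quot.mk _ c = B := by
  obtain ⟨c', rfl, he'⟩ := heB
  exact Quot.sound ⟨e, he, he'⟩

theorem isCycleSaturated_blockEdges (B : Block G) : G.IsCycleSaturated (blockEdges G B) :=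
  fun w hw _ he heB _ he' => ⟨⟨w, hw⟩, mk_eq_of_mem_blockEdges he heB, he'⟩

theorem disjoint_blockEdges {B B' : Block G} (h : B ≠ B') :
    Disjoint (blockEdges G B) (blockEdges G B') :=
  Set.disjoint_left.mpr fun _ ⟨_, hc, he⟩ heB' =>
    h (hc.symm.trans (mk_eq_of_mem_blockEdges he heB'))

theorem exists_walk_of_reflTransGen_cycleRel {c c' : {w : List (Dart E) // G.IsCycle w}}
    (h : Relation.ReflTransGen (CycleRel G) c c') {a b : V} (ha : a ∈ G.vertsOf c.1)
    (hb : b ∈ G.vertsOf c'.1) :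
    ∃ p, G.IsWalkFrom p a b ∧ ∀ d ∈ p, d.1 ∈ blockEdges G (Quot.mk _ c') := by
  induction h generalizing b with
  | refl =>
    obtain ⟨u, hu⟩ := c.2.1.exists_isWalkFrom
    obtain ⟨p, hp, hpc⟩ := hu.exists_walk_of_mem_vertsOf ha hb
    exact ⟨p, hp, fun d hd => mem_blockEdges_mk c (hpc d hd)⟩
  | @tail c₁ c₂ _ hrel ih =>
    obtain ⟨e, ⟨x, hx⟩, ⟨y, hy⟩⟩ := hrel
    obtain ⟨u₁, hu₁⟩ := c₁.2.1.exists_isWalkFrom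
    obtain ⟨u₂, hu₂⟩ := c₂.2.1.exists_isWalkFrom
    obtain ⟨p, hp, hpB⟩ := ih (hu₁.src_mem_vertsOf hx)
    obtain ⟨q, hq, hqc⟩ := hu₂.exists_walk_of_mem_vertsOf (hu₂.src_mem_vertsOf hy) hb
    rw [Quot.sound (⟨e, ⟨x, hx⟩, ⟨y, hy⟩⟩ : CycleRel G c₁ c₂)] at hpB
    refine ⟨p ++ q, hp.append hq, fun d hd => ?_⟩
    rcases List.mem_append.mp hd with hd | hd
    exacts [hpB d hd, mem_blockEdges_mk c₂ (hqc d hd)]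

theorem exists_walk_in_block {B : Block G} {a b : V} (ha : a ∈ vertsOfBlock G B)
    (hb : b ∈ vertsOfBlock G B) : ∃ p, G.IsWalkFrom p a b ∧ ∀ d ∈ p, d.1 ∈ blockEdges G B := by
  obtain ⟨c, rfl, ha⟩ := ha
  obtain ⟨c', hc', hb⟩ := hb
  have hcc' := Quot.eq.mp hc'.symm
  rw [Relation.EqvGen.eqvGen_eq_reflTransGen] at hcc'
  exact hc' ▸ exists_walk_of_reflTransGen_cycleRel hcc' ha hb

def blockCutVerts (G : Multigraph V E) : Block G ⊕ {v : V // IsCutVertex G v} → Set V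
  | .inl B => vertsOfBlock G B
  | .inr v => {v.1}

theorem blockCutVerts_inter_nonempty_of_adj {x y : Block G ⊕ {v : V // IsCutVertex G v}}
    (h : (blockCutGraph G).Adj x y) : (blockCutVerts G x ∩ blockCutVerts G y).Nonempty := by
  rw [blockCutGraph, SimpleGraph.fromRel_adj] at h
  obtain ⟨-, ⟨B, v, rfl, rfl, hv⟩ | ⟨B, v, rfl, rfl, hv⟩⟩ := h <;>
    exact ⟨v.1, by simp [blockCutVerts, hv]⟩

theorem exists_walk_avoiding_of_mem_blockCutVerts {Bs : Block G}
    {x : Block G ⊕ {v : V // IsCutVertex G v}} (hx : x ≠ .inl Bs) {a b : V}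
    (ha : a ∈ blockCutVerts G x) (hb : b ∈ blockCutVerts G x) :
    ∃ p, G.IsWalkFrom p a b ∧ ∀ d ∈ p, d.1 ∉ blockEdges G Bs := by
  rcases x with B | v
  · obtain ⟨p, hp, hpB⟩ := exists_walk_in_block ha hb
    have hB : B ≠ Bs := fun h => hx (h ▸ rfl)
    exact ⟨p, hp, fun d hd => Set.disjoint_left.mp (disjoint_blockEdges hB) (hpB d hd)⟩
  · obtain ⟨rfl, rfl⟩ : a = v.1 ∧ b = v.1 := ⟨ha, hb⟩
    exact ⟨[], isWalkFrom_nil _, by simp⟩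

theorem exists_walk_avoiding_of_walk {Bs : Block G} {x y : Block G ⊕ {v : V // IsCutVertex G v}}
    (p : (blockCutGraph G).Walk x y) (hp : .inl Bs ∉ p.support) {a b : V}
    (ha : a ∈ blockCutVerts G x) (hb : b ∈ blockCutVerts G y) :
    ∃ w, G.IsWalkFrom w a b ∧ ∀ d ∈ w, d.1 ∉ blockEdges G Bs := by
  induction p generalizing a with
  | nil => exact exists_walk_avoiding_of_mem_blockCutVerts (by simpa [eq_comm] using hp) ha hb
  | cons h q ih =>
    rw [SimpleGraph.Walk.support_cons, List.mem_cons, not_or] at hp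
    obtain ⟨m, hmx, hmz⟩ := blockCutVerts_inter_nonempty_of_adj h
    obtain ⟨w₁, hw₁, h₁⟩ := exists_walk_avoiding_of_mem_blockCutVerts (Ne.symm hp.1) ha hmx
    obtain ⟨w₂, hw₂, h₂⟩ := ih hp.2 hmz hb
    refine ⟨w₁ ++ w₂, hw₁.append hw₂, fun d hd => ?_⟩
    rcases List.mem_append.mp hd with hd | hd
    exacts [h₁ d hd, h₂ d hd]

theorem isBridge_blockCutGraph [Fintype E] {B : Block G} {v : {v : V // IsCutVertex G v}}
    (hv : v.1 ∈ vertsOfBlock G B) : (blockCutGraph G).IsBridge s(.inl B, .inr v) := by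
  rw [SimpleGraph.isBridge_iff_forall_walk_mem_edges]
  intro p
  by_contra hp
  have hpath := p.bypass_isPath
  have hedges : s(.inl B, .inr v) ∉ p.bypass.edges := fun h => hp (p.edges_bypass_subset_edges h)
  generalize p.bypass = q at hpath hedges
  cases q with
  | @cons _ z _ h q =>
    rw [SimpleGraph.Walk.cons_isPath_iff] at hpath
    rw [SimpleGraph.Walk.edges_cons, List.mem_cons, not_or] at hedges
    rcases z with _ | v'
    · simp [blockCutGraph] at h
    · have hv' : v'.1 ∈ vertsOfBlock G B := by simpa [blockCutGraph] using h
      obtain ⟨w, hw, hwB⟩ := exists_walk_avoiding_of_walk q hpath.2 rfl rfl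
      obtain ⟨p', hp', hp'B⟩ := exists_walk_in_block hv hv'
      have hvv' := (isCycleSaturated_blockEdges B).eq_of_isWalkFrom hp' hp'B hw hwB
      exact hedges.1 (by rw [Subtype.ext hvv'])

end BlockCutGraph

theorem stmt18_general {V E : Type} [Fintype E] (G : Multigraph V E) :
    (blockCutGraph G).IsAcyclic := by
  refine SimpleGraph.isAcyclic_iff_forall_adj_isBridge.mpr fun x y hxy => ?_
  rw [blockCutGraph, SimpleGraph.fromRel_adj] at hxy
  obtain ⟨-, ⟨B, v, rfl, rfl, hv⟩ | ⟨B, v, rfl, rfl, hv⟩⟩ := hxy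
  · exact isBridge_blockCutGraph hv
  · exact Sym2.eq_swap ▸ isBridge_blockCutGraph hv

/-- for a finite connected graph, the block-cut incidence graph is acyclic. -/
theorem stmt18 {V E : Type} [Fintype V] [Fintype E] (G : Multigraph V E)
    (hconn : G.Conn) :
    (blockCutGraph G).IsAcyclic :=
  stmt18_general G
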